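/- arXiv:2203.02268 — 3 statements merged into one kernel-verified Lean document; each statement's English description precedes it below -/
import Mathlib

section
/- Let α(x) = ∫ min{1, exp(−(τ²/2)(yᵀy − xᵀx))} q(y|x) dy where q(y|x) = N(y | r x, c² I_d). Then α(x) = E_f[ min{1, exp(−(c²τ²/2)(f − xᵀx/c²)) } ], where f follows the non-central chi-squared distribution with d degrees of freedom and non-centrality parameter r² xᵀx / c². -/
open MeasureTheory Real

/-- Squared Euclidean norm on `ℝ^d`. -/
noncomputable def sqnorm {d : ℕ} (x : Fin d → ℝ) : ℝ := ∑ i, x i ^ 2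

/-- Density of the `d`-variate Gaussian `N(m, v I_d)` (variance `v` per coordinate). -/
noncomputable def gpdf {d : ℕ} (m : Fin d → ℝ) (v : ℝ) (x : Fin d → ℝ) : ℝ :=
  (2 * Real.pi * v) ^ (-(d : ℝ) / 2) * Real.exp (-(sqnorm (x - m)) / (2 * v))

/-- The `d`-variate Gaussian measure `N(m, v I_d)` defined via its density. -/
noncomputable def gaussMeasure {d : ℕ} (m : Fin d → ℝ) (v : ℝ) : Measure (Fin d → ℝ) :=
  volume.withDensity (fun x => ENNReal.ofReal (gpdf m v x))

/-
Substituting `y = c • w` turns `N(r x, c² I)` into `N((r / c) x, I)` and the integrand into a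
function of `‖w‖²` alone; translating by the mean then writes the integral as an expectation of a
function of `‖z + (r / c) x‖²` with `z ~ N(0, I)`. A reflection of `ℝ^d` fixes the standard
Gaussian and maps `(r / c) x` to any `μ` of the same norm, so the law of `‖z + μ‖²`, the
non-central chi-squared law, only depends on `‖μ‖² = r² ‖x‖² / c²`.
-/

section

variable {d : ℕ}

@[fun_prop]
lemma continuous_sqnorm : Continuous (sqnorm : (Fin d → ℝ) → ℝ) := by
  unfold sqnorm; fun_prop

lemma sqnorm_smul (a : ℝ) (w : Fin d → ℝ) : sqnorm (a • w) = a ^ 2 * sqnorm w := by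
  simp [sqnorm, Finset.mul_sum, mul_pow]

lemma sqnorm_ofLp (w : EuclideanSpace ℝ (Fin d)) : sqnorm (WithLp.ofLp w) = ‖w‖ ^ 2 := by
  simp [EuclideanSpace.norm_sq_eq, sqnorm]

lemma continuous_gpdf (m : Fin d → ℝ) (v : ℝ) : Continuous (gpdf m v) := by
  unfold gpdf; fun_prop

lemma gpdf_nonneg (m : Fin d → ℝ) {v : ℝ} (hv : 0 ≤ v) (y : Fin d → ℝ) : 0 ≤ gpdf m v y := by
  unfold gpdf; positivity

lemma integral_gaussMeasure (m : Fin d → ℝ) {v : ℝ} (hv : 0 ≤ v) (F : (Fin d → ℝ) → ℝ) :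
    ∫ z, F z ∂gaussMeasure m v = ∫ z, F z * gpdf m v z := by
  rw [gaussMeasure, integral_withDensity_eq_integral_toReal_smul
    (continuous_gpdf m v).measurable.ennreal_ofReal (.of_forall fun _ => ENNReal.ofReal_lt_top)]
  simp_rw [ENNReal.toReal_ofReal (gpdf_nonneg m hv _), smul_eq_mul, mul_comm]

lemma gpdf_add_right (m : Fin d → ℝ) (v : ℝ) (z : Fin d → ℝ) : gpdf m v (z + m) = gpdf 0 v z := by
  simp [gpdf]

lemma integral_mul_gpdf_eq_integral_comp_add (m : Fin d → ℝ) (v : ℝ) (F : (Fin d → ℝ) → ℝ) :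
    ∫ y, F y * gpdf m v y = ∫ z, F (z + m) * gpdf 0 v z := by
  simp_rw [← integral_add_right_eq_self (fun y => F y * gpdf m v y) m, gpdf_add_right]

lemma gpdf_smul_smul {c v : ℝ} (hc : 0 < c) (hv : 0 ≤ v) (m w : Fin d → ℝ) :
    gpdf (c • m) (c ^ 2 * v) (c • w) = (c ^ d)⁻¹ * gpdf m v w := by
  have hscale :
      (2 * π * (c ^ 2 * v)) ^ (-(d : ℝ) / 2) = (c ^ d)⁻¹ * (2 * π * v) ^ (-(d : ℝ) / 2) := by
    rw [show 2 * π * (c ^ 2 * v) = c ^ 2 * (2 * π * v) by ring,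
      mul_rpow (by positivity) (by positivity), ← rpow_natCast c 2, ← rpow_mul hc.le,
      ← rpow_natCast c d, ← rpow_neg hc.le]
    congr 2; push_cast; ring
  have hexp : -sqnorm (c • w - c • m) / (2 * (c ^ 2 * v)) = -sqnorm (w - m) / (2 * v) := by
    rw [← smul_sub, sqnorm_smul]; field_simp
  rw [gpdf, gpdf, hscale, hexp, mul_assoc]

lemma integral_mul_gpdf_smul {c v : ℝ} (hc : 0 < c) (hv : 0 ≤ v) (m : Fin d → ℝ)
    (F : (Fin d → ℝ) → ℝ) :
    ∫ y, F y * gpdf (c • m) (c ^ 2 * v) y = ∫ w, F (c • w) * gpdf m v w := by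
  have := Measure.integral_comp_smul volume (fun y => F y * gpdf (c • m) (c ^ 2 * v) y) c
  simp only [gpdf_smul_smul hc hv, Module.finrank_fin_fun, mul_left_comm _ (c ^ d)⁻¹,
    integral_const_mul, abs_of_pos (inv_pos.2 (pow_pos hc d)), smul_eq_mul] at this
  exact (mul_left_cancel₀ (inv_ne_zero (pow_pos hc d).ne') this).symm

lemma integral_sqnorm_add_mul_gpdf_congr (g : ℝ → ℝ) (v : ℝ) {μ ν : Fin d → ℝ}
    (h : sqnorm μ = sqnorm ν) :
    ∫ z, g (sqnorm (z + μ)) * gpdf 0 v z = ∫ z, g (sqnorm (z + ν)) * gpdf 0 v z := by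
  obtain ⟨μ, rfl⟩ : ∃ μ' : EuclideanSpace ℝ (Fin d), WithLp.ofLp μ' = μ := ⟨WithLp.toLp 2 μ, rfl⟩
  obtain ⟨ν, rfl⟩ : ∃ ν' : EuclideanSpace ℝ (Fin d), WithLp.ofLp ν' = ν := ⟨WithLp.toLp 2 ν, rfl⟩
  have hnorm : ‖ν‖ = ‖μ‖ := by
    rw [← sq_eq_sq₀ (norm_nonneg _) (norm_nonneg _), ← sqnorm_ofLp, ← sqnorm_ofLp, h]
  set T := (ℝ ∙ (ν - μ))ᗮ.reflection
  have hT : T ν = μ := Submodule.reflection_sub hnorm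
  have he := EuclideanSpace.volume_preserving_symm_measurableEquiv_toLp (Fin d)
  rw [← he.integral_comp', ← he.integral_comp',
    ← T.measurePreserving.integral_comp T.toMeasurableEquiv.measurableEmbedding]
  congr 1 with w
  simp only [MeasurableEquiv.toLp_symm_apply, ← WithLp.ofLp_add, gpdf, sub_zero, sqnorm_ofLp,
    ← hT, ← map_add, T.norm_map]

end

theorem stmt6_general {d : ℕ} (x : Fin d → ℝ) (r c τ : ℝ) (hc : 0 < c)
    (μ : Fin d → ℝ) (hμ : sqnorm μ = r ^ 2 * sqnorm x / c ^ 2) :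
    ∫ y, min 1 (Real.exp (-(τ ^ 2 / 2) * (sqnorm y - sqnorm x))) * gpdf (r • x) (c ^ 2) y
      = ∫ f, min 1 (Real.exp (-(c ^ 2 * τ ^ 2 / 2) * (f - sqnorm x / c ^ 2)))
          ∂(Measure.map (fun z => sqnorm (z + μ)) (gaussMeasure (0 : Fin d → ℝ) 1)) := by
  set g : ℝ → ℝ := fun t => min 1 (exp (-(c ^ 2 * τ ^ 2 / 2) * (t - sqnorm x / c ^ 2)))
  set ν := (r / c) • x
  have hrx : r • x = c • ν := by rw [smul_smul, mul_div_cancel₀ _ hc.ne']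
  have hν : sqnorm ν = sqnorm μ := by rw [hμ, sqnorm_smul]; ring
  have hg (w : Fin d → ℝ) :
      min 1 (exp (-(τ ^ 2 / 2) * (sqnorm (c • w) - sqnorm x))) = g (sqnorm w) := by
    rw [sqnorm_smul]
    congr 2
    field_simp
  have hscale := integral_mul_gpdf_smul hc zero_le_one ν
    fun y => min 1 (exp (-(τ ^ 2 / 2) * (sqnorm y - sqnorm x)))
  rw [mul_one, ← hrx] at hscale
  calc _ = ∫ w, g (sqnorm w) * gpdf ν 1 w := by simp only [hscale, hg]
    _ = ∫ z, g (sqnorm (z + ν)) * gpdf 0 1 z := integral_mul_gpdf_eq_integral_comp_add ν 1 _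
    _ = ∫ z, g (sqnorm (z + μ)) * gpdf 0 1 z := integral_sqnorm_add_mul_gpdf_congr g 1 hν
    _ = _ := by
      rw [integral_map (by fun_prop) (by fun_prop), integral_gaussMeasure 0 zero_le_one]

/-- The acceptance-probability integral
`α(x) = ∫ min{1, exp(-(τ²/2)(yᵀy - xᵀx))} N(y|rx, c²I_d) dy`
equals `E_f[min{1, exp(-(c²τ²/2)(f - xᵀx/c²))}]` for `f` non-central chi-squared with `d`
degrees of freedom and non-centrality `r²xᵀx/c²` (realised as the law of `‖z+μ‖²`,
`z ~ N(0, I_d)`, `‖μ‖² = r²xᵀx/c²`). -/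
theorem stmt6 {d : ℕ} (x : Fin d → ℝ) (r c τ : ℝ) (hc : 0 < c) (hτ : 0 < τ)
    (μ : Fin d → ℝ) (hμ : sqnorm μ = r ^ 2 * sqnorm x / c ^ 2) :
    ∫ y, min 1 (Real.exp (-(τ ^ 2 / 2) * (sqnorm y - sqnorm x))) * gpdf (r • x) (c ^ 2) y
      = ∫ f, min 1 (Real.exp (-(c ^ 2 * τ ^ 2 / 2) * (f - sqnorm x / c ^ 2)))
          ∂(Measure.map (fun z => sqnorm (z + μ)) (gaussMeasure (0 : Fin d → ℝ) 1)) :=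
  stmt6_general x r c τ hc μ hμ
end

section
/- Under the same setting (standard Gaussian target in dimension d ≥ 2, proposal N(y|rx, c²I_d), F(x) = x^{(j)}, unique mean-zero solution F̂⁰ of the Poisson equation), F̂⁰ is an even function in each remaining coordinate x^{(j')}, j' ≠ j, and for d ≥ 3 it is invariant under any permutation of the remaining coordinates: F̂⁰(x^{(j)}, x^{(−j)}) = F̂⁰(x^{(j)}, Π x^{(−j)}) for every permutation matrix Π acting on the coordinates other than j. -/
open MeasureTheory Real

/-- Acceptance probability `α(x,y) = min{1, exp(-(τ²/2)(yᵀy - xᵀx))}` for the standard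
Gaussian target. -/
noncomputable def accept {d : ℕ} (τ : ℝ) (x y : Fin d → ℝ) : ℝ :=
  min 1 (Real.exp (-(τ ^ 2 / 2) * (sqnorm y - sqnorm x)))

/-!
Reflections of a coordinate other than `j` and permutations fixing `j` are linear isometries of
`ℝ^d` preserving Lebesgue measure. They leave the acceptance probability, the proposal density,
the Gaussian target and `F(x) = x_j` unchanged, so `F̂ ∘ T` is again a mean-zero solution of the
Poisson equation, and uniqueness forces `F̂ ∘ T = F̂`.
-/

def reflectCoord {ι : Type*} [DecidableEq ι] (k : ι) : (ι → ℝ) ≃ₗ[ℝ] (ι → ℝ) :=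
  LinearEquiv.piCongrRight fun i => if i = k then LinearEquiv.neg ℝ else LinearEquiv.refl ℝ ℝ

theorem reflectCoord_apply {ι : Type*} [DecidableEq ι] (k : ι) (x : ι → ℝ) :
    reflectCoord k x = Function.update x k (-(x k)) := by
  ext i
  by_cases h : i = k
  · subst h; simp [reflectCoord]
  · simp [reflectCoord, h]

theorem measurePreserving_reflectCoord {ι : Type*} [Fintype ι] [DecidableEq ι] (k : ι) :
    MeasurePreserving (reflectCoord k) := by
  refine volume_preserving_pi fun i => ?_
  by_cases h : i = k
  · simp only [h, if_true]
    exact Measure.measurePreserving_neg volume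
  · simp only [h, if_false]
    exact MeasurePreserving.id volume

theorem measurePreserving_funCongrLeft {ι : Type*} [Fintype ι] (σ : Equiv.Perm ι) :
    MeasurePreserving (LinearEquiv.funCongrLeft ℝ ℝ σ) :=
  volume_preserving_arrowCongr' σ.symm (MeasurableEquiv.refl ℝ) (MeasurePreserving.id _)

theorem sqnorm_funCongrLeft {d : ℕ} (σ : Equiv.Perm (Fin d)) (x : Fin d → ℝ) :
    sqnorm (LinearEquiv.funCongrLeft ℝ ℝ σ x) = sqnorm x :=
  Equiv.sum_comp σ fun i => x i ^ 2

theorem sqnorm_reflectCoord {d : ℕ} (k : Fin d) (x : Fin d → ℝ) :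
    sqnorm (reflectCoord k x) = sqnorm x := by
  refine Finset.sum_congr rfl fun i _ => ?_
  by_cases h : i = k <;> simp [reflectCoord, h]

theorem accept_comp {d : ℕ} (T : (Fin d → ℝ) → Fin d → ℝ) (hT : ∀ x, sqnorm (T x) = sqnorm x)
    (τ : ℝ) (x y : Fin d → ℝ) : accept τ (T x) (T y) = accept τ x y := by
  simp only [accept, hT]

/-- The left side is `(P - I) H (x)` for the Metropolis–Hastings kernel `P`: rejected moves
contribute nothing to `H y - H x`. -/
def PoissonEq {d : ℕ} (τ r c : ℝ) (j : Fin d) (H : (Fin d → ℝ) → ℝ) : Prop :=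
  ∀ x, ∫ y, accept τ x y * (H y - H x) * gpdf (r • x) (c ^ 2) y = -(x j)

theorem integral_gaussMeasure_eq {d : ℕ} (m : Fin d → ℝ) (v : ℝ) (f : (Fin d → ℝ) → ℝ) :
    ∫ x, f x ∂gaussMeasure m v = ∫ x, (gpdf m v x).toNNReal • f x :=
  integral_withDensity_eq_integral_smul (by unfold gpdf sqnorm; fun_prop) f

theorem LinearEquiv.measurableEmbedding {E F : Type*} [NormedAddCommGroup E] [NormedSpace ℝ E]
    [FiniteDimensional ℝ E] [MeasurableSpace E] [BorelSpace E] [NormedAddCommGroup F]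
    [NormedSpace ℝ F] [MeasurableSpace F] [BorelSpace F] (T : E ≃ₗ[ℝ] F) :
    MeasurableEmbedding T :=
  T.toContinuousLinearEquiv.toHomeomorph.measurableEmbedding

section Isometry

variable {d : ℕ} (T : (Fin d → ℝ) ≃ₗ[ℝ] (Fin d → ℝ)) (hT : ∀ x, sqnorm (T x) = sqnorm x)
include hT

theorem gpdf_comp (m : Fin d → ℝ) (v : ℝ) (y : Fin d → ℝ) : gpdf (T m) v (T y) = gpdf m v y := by
  simp only [gpdf, ← map_sub, hT]

variable (hmp : MeasurePreserving T)
include hmp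

theorem integral_gaussMeasure_comp (v : ℝ) (f : (Fin d → ℝ) → ℝ) :
    ∫ x, f (T x) ∂gaussMeasure 0 v = ∫ x, f x ∂gaussMeasure 0 v := by
  have hρ : ∀ x, gpdf 0 v (T x) = gpdf 0 v x := fun x => by
    simpa using gpdf_comp T hT 0 v x
  rw [integral_gaussMeasure_eq, integral_gaussMeasure_eq]
  conv_rhs => rw [← hmp.integral_comp T.measurableEmbedding]
  simp only [hρ]

theorem PoissonEq.comp {τ r c : ℝ} {j : Fin d} (hj : ∀ x, T x j = x j)
    {H : (Fin d → ℝ) → ℝ} (hH : PoissonEq τ r c j H) : PoissonEq τ r c j (H ∘ T) := by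
  intro x
  calc ∫ y, accept τ x y * ((H ∘ T) y - (H ∘ T) x) * gpdf (r • x) (c ^ 2) y
      = ∫ y, accept τ (T x) (T y) * (H (T y) - H (T x)) * gpdf (r • T x) (c ^ 2) (T y) := by
        simp only [Function.comp_apply, accept_comp T hT, ← map_smul, gpdf_comp T hT]
    _ = -(x j) := by
        rw [hmp.integral_comp T.measurableEmbedding fun y => accept τ (T x) y * (H y - H (T x)) *
          gpdf (r • T x) (c ^ 2) y, hH, hj]

end Isometry

theorem PoissonEq.comp_eq_of_unique {d : ℕ} {τ r c : ℝ} {j : Fin d} {Fhat : (Fin d → ℝ) → ℝ}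
    (hsol : PoissonEq τ r c j Fhat) (hmean : ∫ x, Fhat x ∂gaussMeasure 0 1 = 0)
    (huniq : ∀ H, PoissonEq τ r c j H → ∫ x, H x ∂gaussMeasure 0 1 = 0 → H = Fhat)
    (T : (Fin d → ℝ) ≃ₗ[ℝ] (Fin d → ℝ)) (hT : ∀ x, sqnorm (T x) = sqnorm x)
    (hmp : MeasurePreserving T) (hj : ∀ x, T x j = x j) (x : Fin d → ℝ) :
    Fhat (T x) = Fhat x :=
  congrFun (huniq (Fhat ∘ T) (hsol.comp T hT hmp hj)
    ((integral_gaussMeasure_comp T hT hmp 1 Fhat).trans hmean)) x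

theorem stmt10_general {d : ℕ} (j : Fin d) (r c τ : ℝ)
    (Fhat : (Fin d → ℝ) → ℝ)
    (hsol : ∀ x : Fin d → ℝ,
      ∫ y, accept τ x y * (Fhat y - Fhat x) * gpdf (r • x) (c ^ 2) y = -(x j))
    (hmean : ∫ x, Fhat x ∂(gaussMeasure (0 : Fin d → ℝ) 1) = 0)
    (huniq : ∀ H : (Fin d → ℝ) → ℝ,
      (∀ x : Fin d → ℝ,
        ∫ y, accept τ x y * (H y - H x) * gpdf (r • x) (c ^ 2) y = -(x j)) →
      (∫ x, H x ∂(gaussMeasure (0 : Fin d → ℝ) 1) = 0) → H = Fhat) :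
    (∀ j' : Fin d, j' ≠ j →
      ∀ x : Fin d → ℝ, Fhat (Function.update x j' (-(x j'))) = Fhat x) ∧
    (3 ≤ d → ∀ σ : Equiv.Perm (Fin d), σ j = j →
      ∀ x : Fin d → ℝ, Fhat (fun i => x (σ i)) = Fhat x) := by
  have hunique := PoissonEq.comp_eq_of_unique (τ := τ) (r := r) (c := c) hsol hmean huniq
  refine ⟨fun j' hj' x => ?_, fun _ σ hσ x => ?_⟩
  · rw [← reflectCoord_apply]
    refine hunique _ (sqnorm_reflectCoord j') (measurePreserving_reflectCoord j') (fun y => ?_) x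
    rw [reflectCoord_apply, Function.update_of_ne hj'.symm]
  · exact hunique _ (sqnorm_funCongrLeft σ) (measurePreserving_funCongrLeft σ)
      (fun y => congrArg y hσ) x

/-- Under the same setting as Proposition 2 (standard Gaussian target in dimension `d ≥ 2`,
proposal `N(y|rx, c²I_d)`, `F(x) = x^{(j)}`, unique mean-zero solution `F̂⁰`), `F̂⁰` is even
in each remaining coordinate, and for `d ≥ 3` it is invariant under any permutation of the
coordinates other than `j`. -/
theorem stmt10 {d : ℕ} (hd : 2 ≤ d) (j : Fin d) (r c τ : ℝ) (hc : 0 < c) (hτ : 0 < τ)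
    (Fhat : (Fin d → ℝ) → ℝ)
    (hsol : ∀ x : Fin d → ℝ,
      ∫ y, accept τ x y * (Fhat y - Fhat x) * gpdf (r • x) (c ^ 2) y = -(x j))
    (hmean : ∫ x, Fhat x ∂(gaussMeasure (0 : Fin d → ℝ) 1) = 0)
    (huniq : ∀ H : (Fin d → ℝ) → ℝ,
      (∀ x : Fin d → ℝ,
        ∫ y, accept τ x y * (H y - H x) * gpdf (r • x) (c ^ 2) y = -(x j)) →
      (∫ x, H x ∂(gaussMeasure (0 : Fin d → ℝ) 1) = 0) → H = Fhat) :
    (∀ j' : Fin d, j' ≠ j →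
      ∀ x : Fin d → ℝ, Fhat (Function.update x j' (-(x j'))) = Fhat x) ∧
    (3 ≤ d → ∀ σ : Equiv.Perm (Fin d), σ j = j →
      ∀ x : Fin d → ℝ, Fhat (fun i => x (σ i)) = Fhat x) :=
  stmt10_general j r c τ Fhat hsol hmean huniq
end

section
/- Let F̂⁰ solve the Poisson equation for the standard Gaussian target N(0, I_d), function F(z) = z^{(1)}, and Metropolis–Hastings proposal q(z̃|z) = N(z̃ | r z, c² I_d) (r = 1 for RWM, r = 1 − c²/2 for MALA). Let μ ∈ ℝ^d and Σ = L Lᵀ with L lower-triangular and invertible, with first diagonal entry L₁₁ > 0. Then the function F̂(x) := L₁₁ · F̂⁰(L^{−1}(x − μ)) solves the Poisson equation for the Gaussian target N(μ, Σ), the function F(x) = x^{(1)}, and the proposal q(y|x) = N(y | μ + r(x−μ), c² Σ). -/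
open MeasureTheory Real Matrix

/-- Density of the general `d`-variate Gaussian `N(μ, v·LLᵀ)` where `Σ = LLᵀ`. -/
noncomputable def genGpdf {d : ℕ} (μ : Fin d → ℝ) (L : Matrix (Fin d) (Fin d) ℝ)
    (v : ℝ) (x : Fin d → ℝ) : ℝ :=
  (2 * Real.pi * v) ^ (-(d : ℝ) / 2) * |L.det|⁻¹ *
    Real.exp (-(1 / (2 * v)) * ((x - μ) ⬝ᵥ ((L * Lᵀ)⁻¹).mulVec (x - μ)))

/-- Proposal density `q(y|x) = N(y | μ + r(x-μ), c²Σ)` with `Σ = LLᵀ`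
(`r = 1` gives RWM; `r = 1 - c²/2` gives MALA for the target `N(μ, Σ)`). -/
noncomputable def propPdf {d : ℕ} (μ : Fin d → ℝ) (L : Matrix (Fin d) (Fin d) ℝ)
    (r c : ℝ) (x y : Fin d → ℝ) : ℝ :=
  genGpdf (μ + r • (x - μ)) L (c ^ 2) y

/- ## Auxiliary lemmas -/

/-- Affine change of variables for the Lebesgue integral on `ℝ^d`. -/
lemma integral_affine {d : ℕ} (μ : Fin d → ℝ) (L : Matrix (Fin d) (Fin d) ℝ)
    (hdet : IsUnit L.det) (f : (Fin d → ℝ) → ℝ) :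
    ∫ y, f y = |L.det| * ∫ z, f (μ + L.mulVec z) := by
  have hd0 : L.det ≠ 0 := hdet.ne_zero
  letI := L.invertibleOfIsUnitDet hdet
  let eL : (Fin d → ℝ) ≃L[ℝ] (Fin d → ℝ) :=
    LinearEquiv.toContinuousLinearEquiv (L.toLinearEquiv' ‹_›)
  let e : (Fin d → ℝ) ≃ᵐ (Fin d → ℝ) :=
    eL.toHomeomorph.toMeasurableEquiv.trans (Homeomorph.addLeft μ).toMeasurableEquiv
  have hcoe : (e : (Fin d → ℝ) → (Fin d → ℝ)) = (fun y => μ + y) ∘ (Matrix.toLin' L) := rfl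
  have hmap : Measure.map e volume = ENNReal.ofReal |L.det⁻¹| • volume := by
    rw [hcoe, ← Measure.map_map (by fun_prop)
        (Matrix.toLin' L).continuous_of_finiteDimensional.measurable,
      Real.map_matrix_volume_pi_eq_smul_volume_pi hd0, Measure.map_smul, map_add_left_eq_self]
  have h2 : ∫ z, f (e z) = |L.det⁻¹| * ∫ y, f y := by
    rw [← MeasureTheory.integral_map_equiv e f, hmap, integral_smul_measure,
      ENNReal.toReal_ofReal (abs_nonneg _), smul_eq_mul]
  have he : ∀ z, e z = μ + L.mulVec z := fun z => rfl
  simp only [he] at h2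
  rw [h2, abs_inv]
  field_simp

lemma quadform {d : ℕ} (L : Matrix (Fin d) (Fin d) ℝ) (hdet : IsUnit L.det) (w : Fin d → ℝ) :
    (L.mulVec w) ⬝ᵥ ((L * Lᵀ)⁻¹).mulVec (L.mulVec w) = sqnorm w := by
  have hL : L⁻¹ * L = 1 := nonsing_inv_mul L hdet
  rw [Matrix.mul_inv_rev, Matrix.mulVec_mulVec, mul_assoc, hL, mul_one,
    ← Matrix.transpose_nonsing_inv, Matrix.mulVec_transpose, dotProduct_comm,
    Matrix.dotProduct_mulVec, Matrix.vecMul_vecMul, hL, Matrix.vecMul_one]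
  simp [sqnorm, dotProduct, sq]

lemma genGpdf_comp {d : ℕ} (μ m z : Fin d → ℝ) (L : Matrix (Fin d) (Fin d) ℝ)
    (hdet : IsUnit L.det) (v : ℝ) :
    genGpdf (μ + L.mulVec m) L v (μ + L.mulVec z) = |L.det|⁻¹ * gpdf m v z := by
  have h1 : (μ + L.mulVec z) - (μ + L.mulVec m) = L.mulVec (z - m) := by
    rw [Matrix.mulVec_sub]; abel
  unfold genGpdf gpdf
  rw [h1, quadform L hdet]
  have h2 : -(1 / (2 * v)) * sqnorm (z - m) = -(sqnorm (z - m)) / (2 * v) := by ring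
  rw [h2]; ring

lemma mulVec_first {d : ℕ} (hd : 1 ≤ d) (L : Matrix (Fin d) (Fin d) ℝ)
    (hlow : ∀ i k : Fin d, i < k → L i k = 0) (u : Fin d → ℝ) :
    L.mulVec u ⟨0, hd⟩ = L ⟨0, hd⟩ ⟨0, hd⟩ * u ⟨0, hd⟩ := by
  show (fun j => L ⟨0, hd⟩ j) ⬝ᵥ u = _
  rw [dotProduct]
  refine Finset.sum_eq_single _ (fun b _ hb => ?_) (by simp)
  rw [hlow ⟨0, hd⟩ b (by
    rw [Fin.lt_def]
    exact Nat.pos_of_ne_zero (fun h => hb (Fin.ext h))), zero_mul]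

lemma gpdf_eq_prod {d : ℕ} (u : Fin d → ℝ) :
    gpdf (0 : Fin d → ℝ) 1 u
      = ∏ i, ((2 * Real.pi) ^ (-(1:ℝ)/2) * Real.exp (-(1/2) * u i ^ 2)) := by
  unfold gpdf sqnorm
  rw [Finset.prod_mul_distrib, Finset.prod_const, ← Real.exp_sum, Finset.card_univ,
    Fintype.card_fin]
  congr 1
  · rw [mul_one, ← Real.rpow_natCast ((2 * Real.pi) ^ (-(1:ℝ)/2)) d,
      ← Real.rpow_mul (by positivity)]
    congr 1
    ring
  · congr 1
    simp only [Pi.sub_apply, Pi.zero_apply, sub_zero, ← Finset.mul_sum]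
    ring

lemma one_dim_integrable :
    Integrable (fun x : ℝ => (2 * Real.pi) ^ (-(1:ℝ)/2) * Real.exp (-(1/2) * x ^ 2)) :=
  (integrable_exp_neg_mul_sq (by norm_num : (0:ℝ) < 1/2)).const_mul _

lemma one_dim_integral :
    ∫ x : ℝ, (2 * Real.pi) ^ (-(1:ℝ)/2) * Real.exp (-(1/2) * x ^ 2) = 1 := by
  rw [MeasureTheory.integral_const_mul, integral_gaussian]
  rw [show Real.pi / (1/2) = 2 * Real.pi by ring, Real.sqrt_eq_rpow,
    ← Real.rpow_add (by positivity)]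
  norm_num

lemma integrable_gpdf {d : ℕ} : Integrable (gpdf (0 : Fin d → ℝ) 1) := by
  have := Integrable.fintype_prod (𝕜 := ℝ)
    (f := fun _ : Fin d => fun x : ℝ => (2 * Real.pi) ^ (-(1:ℝ)/2) * Real.exp (-(1/2) * x ^ 2))
    (fun _ => one_dim_integrable)
  exact this.congr (ae_of_all _ fun u => (gpdf_eq_prod u).symm)

lemma integral_gpdf {d : ℕ} : ∫ u : Fin d → ℝ, gpdf (0 : Fin d → ℝ) 1 u = 1 := by
  simp only [gpdf_eq_prod]
  rw [volume_pi, integral_fintype_prod_eq_prod (ι := Fin d) (μ := fun _ => volume)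
    (f := fun _ : Fin d => fun x : ℝ => (2 * Real.pi) ^ (-(1:ℝ)/2) * Real.exp (-(1/2) * x ^ 2))]
  simp only [one_dim_integral, Finset.prod_const, one_pow]

lemma one_dim_integrable' :
    Integrable (fun x : ℝ => x * ((2 * Real.pi) ^ (-(1:ℝ)/2) * Real.exp (-(1/2) * x ^ 2))) := by
  have := (integrable_mul_exp_neg_mul_sq (by norm_num : (0:ℝ) < 1/2)).const_mul
    ((2 * Real.pi) ^ (-(1:ℝ)/2))
  exact this.congr (ae_of_all _ fun x => by ring)

lemma id_prod_eq {d : ℕ} (i0 : Fin d) (u : Fin d → ℝ) :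
    u i0 * gpdf (0 : Fin d → ℝ) 1 u
      = ∏ i, ((if i = i0 then u i else 1)
          * ((2 * Real.pi) ^ (-(1:ℝ)/2) * Real.exp (-(1/2) * u i ^ 2))) := by
  rw [Finset.prod_mul_distrib, Finset.prod_ite_eq' Finset.univ i0 u, gpdf_eq_prod]
  simp

lemma integrable_id_gpdf {d : ℕ} (i0 : Fin d) :
    Integrable (fun u : Fin d → ℝ => u i0 * gpdf (0 : Fin d → ℝ) 1 u) := by
  have := Integrable.fintype_prod (𝕜 := ℝ)
    (μ := fun _ => volume) (f := fun i : Fin d => fun x : ℝ =>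
      (if i = i0 then x else 1) * ((2 * Real.pi) ^ (-(1:ℝ)/2) * Real.exp (-(1/2) * x ^ 2)))
    (fun i => by
      by_cases h : i = i0
      · simpa [h] using one_dim_integrable'
      · simpa [h] using one_dim_integrable)
  exact this.congr (ae_of_all _ fun u => (id_prod_eq i0 u).symm)

/-- Proposition 3: if `F̂⁰` solves the Poisson equation for the standard Gaussian target,
`F(z) = z^{(1)}` and proposal `N(z̃|rz, c²I_d)`, then `F̂(x) = L₁₁ F̂⁰(L⁻¹(x-μ))` solves the
Poisson equation for the target `N(μ, LLᵀ)`, `F(x) = x^{(1)}` and proposal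
`N(y|μ + r(x-μ), c²LLᵀ)`. -/
theorem stmt11 {d : ℕ} (hd : 1 ≤ d) (r c : ℝ) (hc : 0 < c)
    (μ : Fin d → ℝ) (L : Matrix (Fin d) (Fin d) ℝ)
    (hlow : ∀ i k : Fin d, i < k → L i k = 0)   -- L lower triangular
    (hdet : IsUnit L.det)
    (hL11 : 0 < L ⟨0, hd⟩ ⟨0, hd⟩)
    (F0 : (Fin d → ℝ) → ℝ)
    (hsol0 : ∀ z : Fin d → ℝ,
      ∫ z',
          min 1 ((gpdf 0 1 z' * gpdf (r • z') (c ^ 2) z) /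
                  (gpdf 0 1 z * gpdf (r • z) (c ^ 2) z')) *
            (F0 z' - F0 z) * gpdf (r • z) (c ^ 2) z'
        = -(z ⟨0, hd⟩) + ∫ w, (w ⟨0, hd⟩) * gpdf (0 : Fin d → ℝ) 1 w) :
    ∀ x : Fin d → ℝ,
      ∫ y,
          min 1 ((genGpdf μ L 1 y * propPdf μ L r c y x) /
                  (genGpdf μ L 1 x * propPdf μ L r c x y)) *
            ((L ⟨0, hd⟩ ⟨0, hd⟩ * F0 (L⁻¹.mulVec (y - μ)))
              - (L ⟨0, hd⟩ ⟨0, hd⟩ * F0 (L⁻¹.mulVec (x - μ)))) *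
            propPdf μ L r c x y
        = -(x ⟨0, hd⟩) + ∫ w, (w ⟨0, hd⟩) * genGpdf μ L 1 w := by
  intro x
  set i0 : Fin d := ⟨0, hd⟩ with hi0
  have hd0 : L.det ≠ 0 := hdet.ne_zero
  have habs : |L.det| ≠ 0 := abs_ne_zero.mpr hd0
  have hinv : |L.det|⁻¹ ≠ 0 := inv_ne_zero habs
  set z : Fin d → ℝ := L⁻¹.mulVec (x - μ) with hz
  have hx : x = μ + L.mulVec z := by
    rw [hz, Matrix.mulVec_mulVec, Matrix.mul_nonsing_inv L hdet, Matrix.one_mulVec]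
    abel
  -- pointwise transformation lemmas
  have inv_pt : ∀ b : Fin d → ℝ, L⁻¹.mulVec ((μ + L.mulVec b) - μ) = b := by
    intro b
    rw [add_sub_cancel_left, Matrix.mulVec_mulVec, Matrix.nonsing_inv_mul L hdet,
      Matrix.one_mulVec]
  have tgt : ∀ b : Fin d → ℝ, genGpdf μ L 1 (μ + L.mulVec b) = |L.det|⁻¹ * gpdf 0 1 b := by
    intro b
    have h0 : μ = μ + L.mulVec 0 := by rw [Matrix.mulVec_zero, add_zero]
    calc genGpdf μ L 1 (μ + L.mulVec b)
        = genGpdf (μ + L.mulVec 0) L 1 (μ + L.mulVec b) := by rw [← h0]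
      _ = |L.det|⁻¹ * gpdf 0 1 b := genGpdf_comp μ 0 b L hdet 1
  have key : ∀ a b : Fin d → ℝ,
      propPdf μ L r c (μ + L.mulVec a) (μ + L.mulVec b)
        = |L.det|⁻¹ * gpdf (r • a) (c ^ 2) b := by
    intro a b
    unfold propPdf
    rw [add_sub_cancel_left, ← Matrix.mulVec_smul]
    exact genGpdf_comp μ (r • a) b L hdet (c ^ 2)
  -- rewrite x
  rw [hx]
  -- change of variables on both sides
  conv_rhs => rw [integral_affine μ L hdet]
  conv_lhs => rw [integral_affine μ L hdet]
  -- simplify the LHS integrand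
  have hLhs : ∫ z', (min 1
        ((genGpdf μ L 1 (μ + L.mulVec z') * propPdf μ L r c (μ + L.mulVec z') (μ + L.mulVec z)) /
          (genGpdf μ L 1 (μ + L.mulVec z) * propPdf μ L r c (μ + L.mulVec z) (μ + L.mulVec z'))) *
        ((L i0 i0 * F0 (L⁻¹.mulVec ((μ + L.mulVec z') - μ)))
          - (L i0 i0 * F0 z)) *
        propPdf μ L r c (μ + L.mulVec z) (μ + L.mulVec z'))
      = |L.det|⁻¹ * L i0 i0 * (-(z i0) + ∫ w, (w i0) * gpdf (0 : Fin d → ℝ) 1 w) := by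
    have hpt : ∀ z' : Fin d → ℝ, (min 1
        ((genGpdf μ L 1 (μ + L.mulVec z') * propPdf μ L r c (μ + L.mulVec z') (μ + L.mulVec z)) /
          (genGpdf μ L 1 (μ + L.mulVec z) * propPdf μ L r c (μ + L.mulVec z) (μ + L.mulVec z'))) *
        ((L i0 i0 * F0 (L⁻¹.mulVec ((μ + L.mulVec z') - μ)))
          - (L i0 i0 * F0 z)) *
        propPdf μ L r c (μ + L.mulVec z) (μ + L.mulVec z'))
        = (|L.det|⁻¹ * L i0 i0) *
          (min 1 ((gpdf 0 1 z' * gpdf (r • z') (c ^ 2) z) /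
              (gpdf 0 1 z * gpdf (r • z) (c ^ 2) z')) *
            (F0 z' - F0 z) * gpdf (r • z) (c ^ 2) z') := by
      intro z'
      rw [inv_pt, tgt, tgt, key, key]
      have hratio : (|L.det|⁻¹ * gpdf 0 1 z' * (|L.det|⁻¹ * gpdf (r • z') (c ^ 2) z)) /
          (|L.det|⁻¹ * gpdf 0 1 z * (|L.det|⁻¹ * gpdf (r • z) (c ^ 2) z'))
          = (gpdf 0 1 z' * gpdf (r • z') (c ^ 2) z) /
            (gpdf 0 1 z * gpdf (r • z) (c ^ 2) z') := by
        rw [show |L.det|⁻¹ * gpdf 0 1 z' * (|L.det|⁻¹ * gpdf (r • z') (c ^ 2) z)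
            = (|L.det|⁻¹ * |L.det|⁻¹) * (gpdf 0 1 z' * gpdf (r • z') (c ^ 2) z) by ring,
          show |L.det|⁻¹ * gpdf 0 1 z * (|L.det|⁻¹ * gpdf (r • z) (c ^ 2) z')
            = (|L.det|⁻¹ * |L.det|⁻¹) * (gpdf 0 1 z * gpdf (r • z) (c ^ 2) z') by ring,
          mul_div_mul_left _ _ (mul_ne_zero hinv hinv)]
      rw [hratio]
      ring
    simp only [hpt]
    rw [MeasureTheory.integral_const_mul, hsol0 z]
  rw [hLhs]
  -- simplify the RHS integrand
  have hRhs : ∫ u, ((μ + L.mulVec u) i0 * genGpdf μ L 1 (μ + L.mulVec u))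
      = |L.det|⁻¹ * (μ i0 + L i0 i0 * ∫ u : Fin d → ℝ, u i0 * gpdf (0 : Fin d → ℝ) 1 u) := by
    have h1 : ∀ u : Fin d → ℝ, (μ + L.mulVec u) i0 * genGpdf μ L 1 (μ + L.mulVec u)
        = |L.det|⁻¹ * (μ i0 * gpdf (0 : Fin d → ℝ) 1 u
            + L i0 i0 * (u i0 * gpdf (0 : Fin d → ℝ) 1 u)) := by
      intro u
      rw [tgt u, Pi.add_apply, mulVec_first hd L hlow u]
      ring
    simp only [h1]
    rw [MeasureTheory.integral_const_mul,
      integral_add (integrable_gpdf.const_mul _) ((integrable_id_gpdf i0).const_mul _),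
      MeasureTheory.integral_const_mul, MeasureTheory.integral_const_mul, integral_gpdf]
    ring
  rw [hRhs, Pi.add_apply, mulVec_first hd L hlow z]
  have hcancel : |L.det| * |L.det|⁻¹ = 1 := mul_inv_cancel₀ habs
  calc |L.det| * (|L.det|⁻¹ * L i0 i0 * (-(z i0) + ∫ w, (w i0) * gpdf (0 : Fin d → ℝ) 1 w))
      = (|L.det| * |L.det|⁻¹) * (L i0 i0 * (-(z i0) + ∫ w, (w i0) * gpdf (0 : Fin d → ℝ) 1 w)) := by
        ring
    _ = L i0 i0 * (-(z i0) + ∫ w, (w i0) * gpdf (0 : Fin d → ℝ) 1 w) := by rw [hcancel, one_mul]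
    _ = -(μ i0 + L i0 i0 * z i0) + (|L.det| * |L.det|⁻¹) *
          (μ i0 + L i0 i0 * ∫ u : Fin d → ℝ, u i0 * gpdf (0 : Fin d → ℝ) 1 u) := by
        rw [hcancel, one_mul]; ring
    _ = -(μ i0 + L i0 i0 * z i0) + |L.det| * (|L.det|⁻¹ *
          (μ i0 + L i0 i0 * ∫ u : Fin d → ℝ, u i0 * gpdf (0 : Fin d → ℝ) 1 u)) := by ring
end
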